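/- Let K ⊆ {0,1,2,3}^k represent a k-dimensional USO and let h ∈ [k]. Define the partial swap map on {0,1,2,3} by 0 ↦ 0, 1 ↦ 3, 2 ↦ 2, 3 ↦ 1, and apply it to the h-th coordinate of every element of K. The resulting set K' again represents a k-dimensional USO. -/
import Mathlib


/-- `K ⊆ {0,1,2,3}^k` represents a `k`-dimensional USO: it has `2^k` elements
and any two distinct elements differ by exactly 2 in some coordinate. -/
def IsUSOFun {k : ℕ} (K : Finset (Fin k → Fin 4)) : Prop :=
  K.card = 2 ^ k ∧ ∀ v ∈ K, ∀ w ∈ K, v ≠ w →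
    ∃ i : Fin k, (v i : ℕ) = (w i : ℕ) + 2 ∨ (w i : ℕ) = (v i : ℕ) + 2

/-- The partial swap permutation `0 ↦ 0, 1 ↦ 3, 2 ↦ 2, 3 ↦ 1`. -/
def pswap : Fin 4 → Fin 4 := ![0, 3, 2, 1]

lemma pswap_pswap (a : Fin 4) : pswap (pswap a) = a := by
  fin_cases a <;> rfl

lemma pswap_diff (a b : Fin 4) (hab : (a : ℕ) = (b : ℕ) + 2 ∨ (b : ℕ) = (a : ℕ) + 2) :
    (pswap a : ℕ) = (pswap b : ℕ) + 2 ∨ (pswap b : ℕ) = (pswap a : ℕ) + 2 := by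
  fin_cases a <;> fin_cases b <;> simp_all [pswap] <;> omega

/-- Applying the partial swap to coordinate `h` of every string of a USO
yields a USO again. -/
theorem stmt5 (k : ℕ) (K : Finset (Fin k → Fin 4)) (hK : IsUSOFun K) (h : Fin k) :
    IsUSOFun (K.image fun v => Function.update v h (pswap (v h))) := by
  obtain ⟨hcard, hdiff⟩ := hK
  have hinv : ∀ v : Fin k → Fin 4,
      Function.update (Function.update v h (pswap (v h))) h
        (pswap ((Function.update v h (pswap (v h))) h)) = v := by
    intro v
    simp [Function.update_self, pswap_pswap]
  have hinj : Function.Injective (fun v : Fin k → Fin 4 =>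
      Function.update v h (pswap (v h))) := by
    intro v w hvw
    have := congrArg (fun u : Fin k → Fin 4 => Function.update u h (pswap (u h))) hvw
    simpa only [Function.update_self, hinv] using (hinv v).symm.trans (this.trans (hinv w))
  constructor
  · rw [Finset.card_image_of_injective _ hinj, hcard]
  · intro v' hv' w' hw' hne
    obtain ⟨v, hv, rfl⟩ := Finset.mem_image.mp hv'
    obtain ⟨w, hw, rfl⟩ := Finset.mem_image.mp hw'
    have hvw : v ≠ w := fun e => hne (by rw [e])
    obtain ⟨i, hi⟩ := hdiff v hv w hw hvw
    refine ⟨i, ?_⟩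
    by_cases hih : i = h
    · subst hih
      simpa [Function.update_self] using pswap_diff _ _ hi
    · simpa [Function.update_of_ne hih] using hi
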